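/- arXiv:0902.1236 — 2 statements merged into one kernel-verified Lean document; each statement's English description precedes it below -/
import Mathlib

section
/- For a positive integer n ≥ 2, the ring ℤ/nℤ is weak von Neumann regular if and only if n is a prime power or n is squarefree (i.e., v_p(n) ∈ {0,1} for every prime p). -/
/-- A commutative ring is weak von Neumann regular (WVNR) if for every pair of
finitely generated ideals `I ⊆ J ⊊ R`, if `J` is generated by an idempotent,
then so is `I`. -/
def IsWVNR (R : Type _) [CommRing R] : Prop :=
  ∀ I J : Ideal R, I.FG → J.FG → I ≤ J → J ≠ ⊤ →
    (∃ e : R, IsIdempotentElem e ∧ J = Ideal.span {e}) →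
    ∃ f : R, IsIdempotentElem f ∧ I = Ideal.span {f}

/-- von Neumann regular: every `x` satisfies `x = x² y` for some `y`. -/
def IsVNRegular (R : Type _) [CommRing R] : Prop :=
  ∀ x : R, ∃ y : R, x = x ^ 2 * y

/-! For a finitely generated ideal, being generated by an idempotent is the same as `I * I = I`,
and for a principal ideal `(x)` this means `x = x ^ 2 * y` for some `y`.

If `n` is a prime power, `ZMod n` is local, so its only idempotents are `0` and `1` and the
condition is vacuous. If `n` is squarefree, `ZMod n` is reduced and finite, hence von Neumann
regular, so every finitely generated ideal is generated by an idempotent. Otherwise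
`n = m * p ^ a` with `a ≥ 2`, `m ≠ 1` and `p` coprime to `m`: Bezout gives `m = m ^ 2 * y`,
so `(m)` is generated by an idempotent and is proper, but `(p * m) ≤ (m)` is not, since
`p * m = (p * m) ^ 2 * y` read modulo `p ^ 2` would give `p ∣ m`. -/

section CommRing

variable {R : Type*} [CommRing R]

theorem Ideal.isIdempotentElem_span_singleton_iff {x : R} :
    IsIdempotentElem (Ideal.span {x}) ↔ ∃ y, x = x ^ 2 * y := by
  have hle : Ideal.span {x ^ 2} ≤ Ideal.span {x} :=
    Ideal.span_singleton_le_span_singleton.2 (dvd_pow_self x two_ne_zero)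
  rw [IsIdempotentElem, Ideal.span_singleton_mul_span_singleton, ← sq, le_antisymm_iff,
    and_iff_right hle, Ideal.span_singleton_le_span_singleton, dvd_def]

theorem Ideal.exists_isIdempotentElem_span_singleton_eq_iff {x : R} :
    (∃ e, IsIdempotentElem e ∧ Ideal.span {x} = Ideal.span {e}) ↔ ∃ y, x = x ^ 2 * y :=
  ((Ideal.span {x}).isIdempotentElem_iff_of_fg (Submodule.fg_span_singleton x)).symm.trans
    isIdempotentElem_span_singleton_iff

theorem IsVNRegular.isIdempotentElem_ideal (h : IsVNRegular R) (I : Ideal R) :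
    IsIdempotentElem I := by
  refine le_antisymm Ideal.mul_le_right fun x hx => ?_
  obtain ⟨y, hy⟩ := h x
  rw [hy, sq, mul_assoc]
  exact Ideal.mul_mem_mul hx (I.mul_mem_right _ hx)

theorem IsVNRegular.isWVNR (h : IsVNRegular R) : IsWVNR R := fun I _ hI _ _ _ _ =>
  (I.isIdempotentElem_iff_of_fg hI).1 (h.isIdempotentElem_ideal I)

theorem IsVNRegular.of_isArtinianRing_of_isReduced [IsArtinianRing R] [IsReduced R] :
    IsVNRegular R := by
  intro x
  -- the chain `(x ^ k)` stabilises, so `x ^ k * (1 - x * y) = 0` and `x * (1 - x * y)` is nilpotent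
  obtain ⟨k, y, hy⟩ := IsArtinian.exists_pow_succ_smul_dvd x (1 : R)
  simp only [smul_eq_mul, mul_one] at hy
  have hnil : IsNilpotent (x - x ^ 2 * y) :=
    ⟨k + 1, by
      rw [show x - x ^ 2 * y = x * (1 - x * y) by ring, mul_pow,
        show x ^ (k + 1) * (1 - x * y) ^ (k + 1) =
          (x ^ k - x ^ (k + 1) * y) * (x * (1 - x * y) ^ k) by ring,
        hy, sub_self, zero_mul]⟩
  exact ⟨y, sub_eq_zero.1 (IsReduced.eq_zero _ hnil)⟩

theorem IsLocalRing.eq_zero_or_eq_one_of_isIdempotentElem [IsLocalRing R] {e : R}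
    (he : IsIdempotentElem e) : e = 0 ∨ e = 1 := by
  have h : e * (1 - e) = 0 := he.mul_one_sub_self
  rcases IsLocalRing.isUnit_or_isUnit_one_sub_self e with hu | hu
  · exact .inr (sub_eq_zero.1 ((hu.mul_right_eq_zero).1 h)).symm
  · exact .inl ((hu.mul_left_eq_zero).1 h)

theorem IsLocalRing.isWVNR [IsLocalRing R] : IsWVNR R := by
  rintro I J - - hIJ hJ ⟨e, he, rfl⟩
  rcases IsLocalRing.eq_zero_or_eq_one_of_isIdempotentElem he with rfl | rfl
  · refine ⟨0, .zero, ?_⟩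
    simpa using hIJ
  · exact absurd Ideal.span_singleton_one hJ

end CommRing

namespace ZMod

theorem isLocalRing_of_isPrimePow {n : ℕ} (hn : IsPrimePow n) : IsLocalRing (ZMod n) := by
  obtain ⟨p, k, hp, hk, rfl⟩ := hn
  rw [← Nat.prime_iff] at hp
  have : Fact (1 < p ^ k) := ⟨Nat.one_lt_pow hk.ne' hp.one_lt⟩
  refine .of_isUnit_or_isUnit_one_sub_self fun a => ?_
  rw [← natCast_zmod_val a]
  by_cases hpa : p ∣ a.val
  · refine .inr (IsNilpotent.isUnit_one_sub ⟨k, ?_⟩)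
    rw [← Nat.cast_pow, natCast_eq_zero_iff]
    exact pow_dvd_pow_of_dvd hpa k
  · exact .inl ((isUnit_iff_coprime _ _).2
      (((hp.coprime_iff_not_dvd).2 hpa).symm.pow_right k))

theorem exists_natCast_eq_sq_mul {d m : ℕ} (h : d.Coprime m) :
    ∃ y : ZMod (d * m), (d : ZMod (d * m)) = d ^ 2 * y := by
  refine ⟨d.gcdA m, ?_⟩
  have hbez := congrArg (Int.cast : ℤ → ZMod (d * m)) (Nat.gcd_eq_gcd_ab d m)
  have hdm : ((d * m : ℕ) : ZMod (d * m)) = 0 := natCast_self _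
  push_cast [h.gcd_eq_one] at hbez hdm
  linear_combination (d : ZMod (d * m)) * hbez + d.gcdB m * hdm

theorem dvd_of_natCast_eq_sq_mul {n q c : ℕ} (hq : q ∣ n) (hc : q ∣ c ^ 2) {y : ZMod n}
    (h : (c : ZMod n) = c ^ 2 * y) : q ∣ c := by
  have := congrArg (castHom hq (ZMod q)) h
  rw [map_mul, map_pow, map_natCast, ← Nat.cast_pow, (natCast_eq_zero_iff _ _).2 hc,
    zero_mul, natCast_eq_zero_iff] at this
  exact this

theorem not_isWVNR_mul_prime_pow {p a m : ℕ} (hp : p.Prime) (ha : 2 ≤ a) (hm : m ≠ 1)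
    (hpm : p.Coprime m) :
    ¬ IsWVNR (ZMod (m * p ^ a)) := by
  intro hW
  have hJ : Ideal.span {(m : ZMod (m * p ^ a))} ≠ ⊤ := by
    rw [Ne, Ideal.span_singleton_eq_top, isUnit_iff_coprime]
    exact fun h => hm ((Nat.coprime_self m).1 (h.coprime_dvd_right (dvd_mul_right m _)))
  have hIJ :
      Ideal.span {((p * m : ℕ) : ZMod (m * p ^ a))} ≤ Ideal.span {(m : ZMod (m * p ^ a))} :=
    Ideal.span_singleton_le_span_singleton.2 ⟨p, by push_cast; ring⟩
  obtain ⟨f, hf, hI⟩ := hW _ _ (Submodule.fg_span_singleton _) (Submodule.fg_span_singleton _)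
    hIJ hJ (Ideal.exists_isIdempotentElem_span_singleton_eq_iff.2
      (exists_natCast_eq_sq_mul (hpm.symm.pow_right a)))
  obtain ⟨y, hy⟩ := Ideal.exists_isIdempotentElem_span_singleton_eq_iff.1 ⟨f, hf, hI⟩
  have hp2 : p * p ∣ p * m := by
    rw [← sq]
    refine dvd_of_natCast_eq_sq_mul (dvd_mul_of_dvd_right (pow_dvd_pow p ha) m) ?_ hy
    exact mul_pow p m 2 ▸ dvd_mul_right _ _
  exact hp.one_lt.ne' (hpm.eq_one_of_dvd (Nat.dvd_of_mul_dvd_mul_left hp.pos hp2))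

end ZMod

theorem stmt_12 (n : ℕ) (hn : 2 ≤ n) :
    IsWVNR (ZMod n) ↔ IsPrimePow n ∨ Squarefree n := by
  have : NeZero n := ⟨by omega⟩
  refine ⟨fun hW => ?_, ?_⟩
  · by_contra! h
    obtain ⟨p, hp, hpp⟩ : ∃ p, p.Prime ∧ p * p ∣ n := by
      simpa [Nat.squarefree_iff_prime_squarefree] using h.2
    obtain ⟨a, ha, m, hpm, rfl⟩ : ∃ a, 2 ≤ a ∧ ∃ m, p.Coprime m ∧ m * p ^ a = n :=
      ⟨_, (hp.pow_dvd_iff_le_factorization (NeZero.ne n)).1 (sq p ▸ hpp), _,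
        Nat.coprime_ordCompl hp (NeZero.ne n),
        (mul_comm _ _).trans (Nat.ordProj_mul_ordCompl_eq_self n p)⟩
    refine ZMod.not_isWVNR_mul_prime_pow hp ha (fun hm => h.1 ?_) hpm hW
    rw [hm, one_mul]
    exact (Nat.prime_iff.1 hp).isPrimePow.pow (by omega)
  · rintro (h | h)
    · have := ZMod.isLocalRing_of_isPrimePow h
      exact IsLocalRing.isWVNR
    · have : IsReduced (ZMod n) := isReduced_zmod.2 (.inl h)
      exact IsVNRegular.of_isArtinianRing_of_isReduced.isWVNR
end

section
/- For a commutative ring R, the formal power series ring R[[x]] is weak von Neumann regular if and only if R has exactly two idempotent elements. -/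
/-!
An idempotent power series whose constant coefficient is `0` or `1` is itself `0` or `1`,
because `1 - f`, resp. `f`, is then a unit. Hence `R⟦X⟧` has only the trivial idempotents
when `R` does, and a ring without nontrivial idempotents is WVNR for trivial reasons: the only
proper ideal generated by an idempotent is `0`. Conversely, for an idempotent `e ≠ 1` of `R`,
WVNR makes `(e X) ⊆ (e)` generated by an idempotent with zero constant coefficient, that is
by `0`, so `e = 0`.
-/

theorem IsIdempotentElem.eq_zero_of_isUnit_one_sub {S : Type*} [Ring S] {f : S}
    (hf : IsIdempotentElem f) (hu : IsUnit (1 - f)) : f = 0 := by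
  simpa using (IsIdempotentElem.iff_eq_one_of_isUnit hu).mp hf.one_sub

theorem IsIdempotentElem.span_singleton_ne_top {S : Type*} [CommRing S] {e : S}
    (he : IsIdempotentElem e) (he1 : e ≠ 1) : Ideal.span {e} ≠ ⊤ := by
  rw [Ne, Ideal.span_singleton_eq_top]
  exact fun hu => he1 ((IsIdempotentElem.iff_eq_one_of_isUnit hu).mp he)

theorem isWVNR_of_isIdempotentElem_eq_zero_or_one {S : Type*} [CommRing S]
    (h : ∀ e : S, IsIdempotentElem e → e = 0 ∨ e = 1) : IsWVNR S := by
  rintro I J - - hIJ hJ ⟨e, he, rfl⟩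
  rcases h e he with rfl | rfl
  · refine ⟨0, IsIdempotentElem.zero, ?_⟩
    rw [Ideal.span_singleton_eq_bot.mpr rfl] at hIJ ⊢
    exact le_bot_iff.mp hIJ
  · exact absurd Ideal.span_singleton_one hJ

theorem IsWVNR.exists_isIdempotentElem_span_mul {S : Type*} [CommRing S] (hS : IsWVNR S)
    {e : S} (he : IsIdempotentElem e) (he1 : e ≠ 1) (x : S) :
    ∃ f : S, IsIdempotentElem f ∧ Ideal.span {e * x} = Ideal.span {f} :=
  hS _ _ ⟨{e * x}, by simp⟩ ⟨{e}, by simp⟩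
    (Ideal.span_singleton_le_span_singleton.mpr (dvd_mul_right e x))
    (he.span_singleton_ne_top he1) ⟨e, he, rfl⟩

namespace PowerSeries

variable {R : Type*} [CommRing R]

theorem eq_zero_of_isIdempotentElem_of_constantCoeff_eq_zero {f : R⟦X⟧}
    (hf : IsIdempotentElem f) (h0 : constantCoeff f = 0) : f = 0 :=
  hf.eq_zero_of_isUnit_one_sub (isUnit_iff_constantCoeff.mpr (by simp [h0]))

theorem isIdempotentElem_eq_zero_or_one (h : ∀ e : R, IsIdempotentElem e → e = 0 ∨ e = 1)
    {f : R⟦X⟧} (hf : IsIdempotentElem f) : f = 0 ∨ f = 1 := by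
  rcases h _ (hf.map constantCoeff) with h0 | h1
  · exact Or.inl (eq_zero_of_isIdempotentElem_of_constantCoeff_eq_zero hf h0)
  · refine Or.inr (sub_eq_zero.mp ?_).symm
    exact eq_zero_of_isIdempotentElem_of_constantCoeff_eq_zero hf.one_sub (by simp [h1])

theorem isIdempotentElem_eq_zero_or_one_of_isWVNR (hR : IsWVNR R⟦X⟧) {e : R}
    (he : IsIdempotentElem e) : e = 0 ∨ e = 1 := by
  refine or_iff_not_imp_right.mpr fun he1 => ?_
  have hCe1 : C e ≠ 1 := fun h => he1 (C_injective (h.trans (map_one C).symm))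
  obtain ⟨f, hf, hspan⟩ := hR.exists_isIdempotentElem_span_mul (he.map C) hCe1 X
  have hf0 : f = 0 := by
    obtain ⟨g, hg⟩ := Ideal.mem_span_singleton.mp (hspan ▸ Ideal.mem_span_singleton_self f)
    exact eq_zero_of_isIdempotentElem_of_constantCoeff_eq_zero hf (by simp [hg])
  rw [hf0, Ideal.span_singleton_eq_bot.mpr rfl, Ideal.span_singleton_eq_bot] at hspan
  simpa using congrArg (coeff 1) hspan

end PowerSeries

theorem stmt_16_general (R : Type _) [CommRing R] :
    IsWVNR (PowerSeries R) ↔ ∀ e : R, IsIdempotentElem e → e = 0 ∨ e = 1 :=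
  ⟨fun hR _ he => PowerSeries.isIdempotentElem_eq_zero_or_one_of_isWVNR hR he,
    fun h => isWVNR_of_isIdempotentElem_eq_zero_or_one fun _ =>
      PowerSeries.isIdempotentElem_eq_zero_or_one h⟩

theorem stmt_16 (R : Type _) [CommRing R] [Nontrivial R] :
    IsWVNR (PowerSeries R) ↔ ∀ e : R, IsIdempotentElem e → e = 0 ∨ e = 1 :=
  stmt_16_general R
end
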